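/- Let (Ω, F, P; (F_t)_{t≥0}) be a filtered probability space. Let (Z_t)_{t≥0} be a locally bounded, measurable, (F_t)-adapted real-valued process and let (A_t)_{t≥0} be a continuous, nondecreasing, (F_t)-adapted real-valued process with A_0 = 0. Assume that for every (F_t)-stopping time η and every t ≥ 0: E|Z_{t∧η}| ≤ E ∫_0^{t∧η} |Z_s| dA_s (Lebesgue–Stieltjes integral). Then for every t ≥ 0, Z_t = 0 almost surely. -/

import Mathlib

noncomputable section
open MeasureTheory ProbabilityTheory Filter Set
open scoped ENNReal NNReal RealInnerProductSpace Topology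

/-- Euclidean space `ℝ^d`. -/
abbrev Ed (d : ℕ) := EuclideanSpace ℝ (Fin d)

/-- `μ` is a finite symmetric measure on the unit sphere `S^{d-1}`. -/
def IsSymSphereMeasure (d : ℕ) (μ : Measure (Ed d)) : Prop :=
  IsFiniteMeasure μ ∧ μ (Metric.sphere (0 : Ed d) 1)ᶜ = 0 ∧
    Measure.map (fun x => -x) μ = μ

/-- The Lévy measure `ν(U) = ∫_{S^{d-1}} ∫_0^∞ 1_U(rθ) r^{-1-α} dr μ(dθ)`. -/
def levyMeasure (d : ℕ) (α : ℝ) (μ : Measure (Ed d)) : Measure (Ed d) :=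
  Measure.map (fun p : ℝ × Ed d => p.1 • p.2)
    ((((volume : Measure ℝ).restrict (Ioi 0)).withDensity
        (fun r => ENNReal.ofReal (r ^ (-1 - α)))).prod μ)

/-- The Lévy symbol `ψ(ξ) = ∫ (1 - cos⟪ξ,x⟫) ν(dx)`. -/
def stablePsi (d : ℕ) (ν : Measure (Ed d)) (ξ : Ed d) : ℝ :=
  ∫ x, (1 - Real.cos ⟪ξ, x⟫) ∂ν

/-- Condition (H^α): `ψ(ξ) ≥ C |ξ|^α`. -/
def CondH (d : ℕ) (α : ℝ) (ν : Measure (Ed d)) : Prop :=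
  ∃ C : ℝ, 0 < C ∧ ∀ ξ : Ed d, C * ‖ξ‖ ^ α ≤ stablePsi d ν ξ

/-- `L` is a `d`-dimensional symmetric `α`-stable process with spherical measure `μsph`,
on the filtered probability space `(Ω, mΩ, P, F)`. -/
structure IsSymStable (d : ℕ) (α : ℝ) (μsph : Measure (Ed d)) {Ω : Type*}
    {mΩ : MeasurableSpace Ω} (P : Measure Ω) (F : Filtration ℝ mΩ)
    (L : ℝ → Ω → Ed d) : Prop where
  rightCont : ∀ ω t, ContinuousWithinAt (fun s => L s ω) (Ici t) t
  leftLim : ∀ ω t, ∃ l, Tendsto (fun s => L s ω) (𝓝[<] t) (𝓝 l)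
  zero : ∀ ω, L 0 ω = 0
  adapted : Adapted F L
  indep : ∀ s t : ℝ, 0 ≤ s → s ≤ t →
    Indep (MeasurableSpace.comap (fun ω => L t ω - L s ω) inferInstance) (F s) P
  charFn : ∀ s t : ℝ, 0 ≤ s → s ≤ t → ∀ ξ : Ed d,
    ∫ ω, Complex.exp (Complex.I * (⟪ξ, L t ω - L s ω⟫ : ℂ)) ∂P =
      Complex.exp (-(((t - s) * stablePsi d (levyMeasure d α μsph) ξ : ℝ) : ℂ))

/-- The Markov semigroup `T_t f(x) = E f(x + L_t)`. -/
def stableSg {Ω : Type*} {mΩ : MeasurableSpace Ω} (P : Measure Ω)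
    {d : ℕ} (L : ℝ → Ω → Ed d) (t : ℝ) (f : Ed d → ℝ) (x : Ed d) : ℝ :=
  ∫ ω, f (x + L t ω) ∂P

/-- The Bessel potential operator `(I - Δ)^{β/2}` acting on (nice) complex functions,
via the Fourier multiplier `(1 + |ξ|²)^{β/2}`. -/
def besselOp (d : ℕ) (β : ℝ) (φ : Ed d → ℂ) : Ed d → ℂ :=
  (FourierTransformInv.fourierInv : (Ed d → ℂ) → (Ed d → ℂ))
    (fun ξ => (((1 + ‖ξ‖ ^ 2) ^ (β / 2) : ℝ) : ℂ) *
      (FourierTransform.fourier : (Ed d → ℂ) → (Ed d → ℂ)) φ ξ)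

/-- `g = (I - Δ)^{β/2} f` in the sense of tempered distributions. -/
def IsBesselPair (d : ℕ) (β : ℝ) (f g : Ed d → ℝ) : Prop :=
  ∀ φ : SchwartzMap (Ed d) ℂ,
    ∫ x, (g x : ℂ) * φ x = ∫ x, (f x : ℂ) * besselOp d β (fun y => φ y) x

/-- Membership in the Bessel potential space `H^β_p`. -/
def MemBessel (d : ℕ) (β p : ℝ) (f : Ed d → ℝ) : Prop :=
  MemLp f (ENNReal.ofReal p) volume ∧
    ∃ g : Ed d → ℝ, MemLp g (ENNReal.ofReal p) volume ∧ IsBesselPair d β f g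

/-- The norm `‖f‖_{β,p}` of the Bessel potential space `H^β_p`. -/
def besselNorm (d : ℕ) (β p : ℝ) (f : Ed d → ℝ) : ℝ≥0∞ :=
  ⨅ g ∈ {g : Ed d → ℝ | IsBesselPair d β f g}, eLpNorm g (ENNReal.ofReal p) volume

/-- The norm of `L^q([S,T]; L^p(ℝ^d))`. -/
def lqLpNorm {G : Type*} [NormedAddCommGroup G] (d : ℕ) (p q S T : ℝ)
    (f : ℝ → Ed d → G) : ℝ≥0∞ :=
  (∫⁻ t in Ioc S T, (eLpNorm (f t) (ENNReal.ofReal p) volume) ^ q) ^ (1 / q)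

/-- `g` is the weak gradient of `f`. -/
def IsWeakGradient (d : ℕ) (f : Ed d → ℝ) (g : Ed d → Ed d) : Prop :=
  ∀ φ : Ed d → ℝ, ContDiff ℝ (⊤ : ℕ∞) φ → HasCompactSupport φ → ∀ v : Ed d,
    ∫ x, f x * fderiv ℝ φ x v = -∫ x, ⟪g x, v⟫ * φ x

/-- The generator `L_0` of the Lévy process with Lévy measure `ν`. -/
def genL0 (d : ℕ) (ν : Measure (Ed d)) (g : Ed d → ℝ) (x : Ed d) : ℝ :=
  ∫ z, (g (x + z) - g x -
    ({z : Ed d | ‖z‖ ≤ 1}.indicator (fun z => fderiv ℝ g x z) z)) ∂ν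

/-- The adjoint `L_0^*`. -/
def genL0star (d : ℕ) (ν : Measure (Ed d)) (g : Ed d → ℝ) (x : Ed d) : ℝ :=
  ∫ z, (g (x - z) - g x +
    ({z : Ed d | ‖z‖ ≤ 1}.indicator (fun z => fderiv ℝ g x z) z)) ∂ν

/-- `u ∈ C([0,∞); H^γ_p)`. -/
def ContBessel (d : ℕ) (γ p : ℝ) (u : ℝ → Ed d → ℝ) : Prop :=
  (∀ t : ℝ, 0 ≤ t → MemBessel d γ p (u t)) ∧
  ∀ t : ℝ, 0 ≤ t → ∀ ε : ℝ, 0 < ε → ∃ δ > 0, ∀ s : ℝ, 0 ≤ s → |s - t| < δ →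
    besselNorm d γ p (fun x => u s x - u t x) < ENNReal.ofReal ε

/-- `u` (with weak gradient `G`) is a generalized solution of
`∂_t u = L_0 u + κ|∇u| + f`,  `u_0 = 0`. -/
def IsGenSolution (d : ℕ) (ν : Measure (Ed d)) (κ : ℝ) (f : ℝ → Ed d → ℝ)
    (u : ℝ → Ed d → ℝ) (G : ℝ → Ed d → Ed d) : Prop :=
  (∀ s : ℝ, 0 ≤ s → IsWeakGradient d (u s) (G s)) ∧
  ∀ φ : ℝ × Ed d → ℝ, ContDiff ℝ (⊤ : ℕ∞) φ → HasCompactSupport φ →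
    -(∫ t in Ioi (0:ℝ), ∫ x, u t x * deriv (fun s => φ (s, x)) t) =
      (∫ t in Ioi (0:ℝ), ∫ x, u t x * genL0star d ν (fun y => φ (t, y)) x) +
      (∫ t in Ioi (0:ℝ), ∫ x, (κ * ‖G t x‖ + f t x) * φ (t, x))

/-- The fractional Sobolev norm `‖f‖~_{β,p}`. -/
def fracSobNorm {G : Type*} [NormedAddCommGroup G] (d : ℕ) (β p : ℝ)
    (f : Ed d → G) : ℝ≥0∞ :=
  eLpNorm f (ENNReal.ofReal p) volume +
    (∫⁻ q : Ed d × Ed d,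
      (‖f q.1 - f q.2‖₊ : ℝ≥0∞) ^ p / ENNReal.ofReal (‖q.1 - q.2‖ ^ ((d : ℝ) + β * p))) ^ (1 / p)

/-- The solution class `S^ζ_b(x)`: adapted càdlàg processes on `[0,ζ)` solving
`X_t = x + ∫_0^t b_s(X_s) ds + L_t`. -/
def InSolClass (d : ℕ) {Ω : Type*} {mΩ : MeasurableSpace Ω} (P : Measure Ω)
    (F : Filtration ℝ mΩ) (L : ℝ → Ω → Ed d) (b : ℝ → Ed d → Ed d)
    (x : Ed d) (ζ : Ω → ℝ≥0∞) (X : ℝ → Ω → Ed d) : Prop :=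
  Adapted F X ∧
  (∀ ω, ∀ t : ℝ, 0 ≤ t → ENNReal.ofReal t < ζ ω →
    ContinuousWithinAt (fun s => X s ω) (Ici t) t ∧
    (0 < t → ∃ l, Tendsto (fun s => X s ω) (𝓝[<] t) (𝓝 l))) ∧
  (∀ᵐ ω ∂P,
    (∀ T : ℝ, 0 ≤ T → ENNReal.ofReal T < ζ ω →
      IntegrableOn (fun s => b s (X s ω)) (Ioc 0 T)) ∧
    (∀ t : ℝ, 0 ≤ t → ENNReal.ofReal t < ζ ω →
      X t ω = x + (∫ s in Ioc (0:ℝ) t, b s (X s ω)) + L t ω))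



namespace St6Aux

variable {Ω : Type*}

/-- Generalized right-continuous inverse of `s ↦ A s ω`, capped at `K`. -/
def tauInv (A : ℝ → Ω → ℝ) (K u : ℝ) (ω : Ω) : ℝ :=
  sInf ({s : ℝ | 0 ≤ s ∧ u ≤ A s ω} ∪ {K})

variable {A : ℝ → Ω → ℝ} {K u c v : ℝ} {ω : Ω}

lemma tau_bddBelow (hK : 0 ≤ K) :
    BddBelow ({s : ℝ | 0 ≤ s ∧ u ≤ A s ω} ∪ {K}) :=
  ⟨0, by rintro x (⟨hx, -⟩ | rfl); exacts [hx, hK]⟩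

lemma tau_nonempty : ({s : ℝ | 0 ≤ s ∧ u ≤ A s ω} ∪ {K}).Nonempty :=
  ⟨K, Or.inr rfl⟩

lemma tau_nonneg (hK : 0 ≤ K) : 0 ≤ tauInv A K u ω :=
  le_csInf tau_nonempty (by rintro x (⟨hx, -⟩ | rfl); exacts [hx, hK])

lemma tau_le_K (hK : 0 ≤ K) : tauInv A K u ω ≤ K :=
  csInf_le (tau_bddBelow hK) (Or.inr rfl)

lemma tau_mono (hK : 0 ≤ K) {u' : ℝ} (h : u ≤ u') :
    tauInv A K u ω ≤ tauInv A K u' ω :=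
  csInf_le_csInf (tau_bddBelow hK) tau_nonempty
    (by rintro x (⟨hx, hx'⟩ | rfl); exacts [Or.inl ⟨hx, h.trans hx'⟩, Or.inr rfl])

lemma tau_le_iff (hm : Monotone fun s => A s ω) (hc : Continuous fun s => A s ω)
    (hK : 0 ≤ K) (hc0 : 0 ≤ c) (hcK : c < K) :
    tauInv A K u ω ≤ c ↔ u ≤ A c ω := by
  constructor
  · intro hτ
    by_contra hlt
    push_neg at hlt
    have h1 : ∀ᶠ s in 𝓝 c, A s ω < u := (hc.tendsto c).eventually_lt_const hlt
    have h2 : ∀ᶠ s in 𝓝 c, s < K := tendsto_id.eventually_lt_const hcK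
    have h3 := (h1.and h2).filter_mono (nhdsWithin_le_nhds (s := Ioi c))
    obtain ⟨s₀, ⟨hs₀u, hs₀K⟩, hs₀c⟩ := (h3.and self_mem_nhdsWithin).exists
    have hlb : s₀ ≤ tauInv A K u ω := by
      refine le_csInf tau_nonempty ?_
      rintro x (⟨hx0, hxu⟩ | rfl)
      · by_contra hxs
        push_neg at hxs
        exact absurd (hxu.trans (hm hxs.le)) (not_le.mpr hs₀u)
      · exact hs₀K.le
    exact absurd (hlb.trans hτ) (not_le.mpr hs₀c)
  · intro h
    exact csInf_le (tau_bddBelow hK) (Or.inl ⟨hc0, h⟩)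

lemma A_le_of_le_tau (hm : Monotone fun s => A s ω) (hc : Continuous fun s => A s ω)
    (h0 : A 0 ω = 0) (hK : 0 ≤ K) (hu : 0 < u) (hv : v ≤ tauInv A K u ω) :
    A v ω ≤ u := by
  by_contra hlt
  push_neg at hlt
  have h1 : ∀ᶠ s in 𝓝 v, u < A s ω := (hc.tendsto v).eventually_const_lt hlt
  have h2 := h1.filter_mono (nhdsWithin_le_nhds (s := Iio v))
  obtain ⟨s₀, hs₀u, hs₀v⟩ := (h2.and self_mem_nhdsWithin).exists
  have hs₀0 : 0 ≤ s₀ := by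
    by_contra hneg
    push_neg at hneg
    have hle : A s₀ ω ≤ A 0 ω := hm hneg.le
    rw [h0] at hle
    linarith
  have : tauInv A K u ω ≤ s₀ := csInf_le (tau_bddBelow hK) (Or.inl ⟨hs₀0, hs₀u.le⟩)
  exact absurd ((hv.trans this).trans_lt hs₀v) (lt_irrefl _)

lemma tau_eq_K (hm : Monotone fun s => A s ω) (hK : 0 ≤ K) (h : A K ω < u) :
    tauInv A K u ω = K := by
  refine le_antisymm (tau_le_K hK) (le_csInf tau_nonempty ?_)
  rintro x (⟨hx0, hxu⟩ | rfl)
  · by_contra hxK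
    push_neg at hxK
    exact absurd (hxu.trans (hm hxK.le)) (not_le.mpr h)
  · exact le_rfl

lemma ofReal_clamp (f : ℝ → ℝ) (hf : Monotone f) (h0 : f 0 = 0) {c : ℝ} (hc : 0 ≤ c)
    {a b : ℝ} (hab : a ≤ b) :
    ENNReal.ofReal (f (min b c) - f (max a 0)) =
      ENNReal.ofReal (f (max 0 (min b c)) - f (max 0 (min a c))) := by
  rcases le_total b 0 with hb | hb
  · have h1 : min b c = b := min_eq_left (hb.trans hc)
    have h2 : min a c = a := min_eq_left ((hab.trans hb).trans hc)
    have h3 : max a 0 = 0 := max_eq_right (hab.trans hb)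
    have h4 : max 0 b = 0 := max_eq_left hb
    have h5 : max 0 a = 0 := max_eq_left (hab.trans hb)
    rw [h1, h2, h3, h4, h5, sub_self, ENNReal.ofReal_zero, ENNReal.ofReal_of_nonpos]
    have := hf hb
    rw [h0] at this
    linarith
  · rcases le_total a 0 with ha | ha
    · have h2 : min a c = a := min_eq_left (ha.trans hc)
      have h3 : max a 0 = 0 := max_eq_right ha
      have h5 : max 0 a = 0 := max_eq_left ha
      have h6 : max 0 (min b c) = min b c := max_eq_right (le_min hb hc)
      rw [h2, h3, h5, h6, h0]
    · have h3 : max a 0 = a := max_eq_left ha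
      have h6 : max 0 (min b c) = min b c := max_eq_right (le_min hb hc)
      have h7 : max 0 (min a c) = min a c := max_eq_right (le_min ha hc)
      rw [h3, h6, h7]
      rcases le_total a c with hac | hca
      · rw [min_eq_left hac]
      · have h8 : min a c = c := min_eq_right hca
        have h9 : min b c = c := min_eq_right (hca.trans hab)
        rw [h8, h9, sub_self, ENNReal.ofReal_zero, ENNReal.ofReal_of_nonpos]
        have := hf hca
        linarith


lemma map_volume_tauInv (hm : Monotone fun s => A s ω) (hc : Continuous fun s => A s ω)
    (h0 : A 0 ω = 0) (St : StieltjesFunction ℝ) (hSt : ∀ x, St x = A x ω)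
    (hc0 : 0 ≤ c) (hcK : c < K) :
    St.measure.restrict (Ioc 0 c) =
      Measure.map (fun u => tauInv A K u ω) ((volume : Measure ℝ).restrict (Ioc 0 (A c ω))) := by
  have hK0 : 0 ≤ K := hc0.trans hcK.le
  have hτmono : Monotone (fun u => tauInv A K u ω) := fun u u' h => tau_mono hK0 h
  have hτm : Measurable (fun u => tauInv A K u ω) := hτmono.measurable
  refine Measure.ext_of_Ioc' _ _ (fun a b _ => ?_) (fun a b hab => ?_)
  · refine ne_top_of_le_ne_top ?_ (Measure.restrict_apply_le _ _)
    rw [St.measure_Ioc]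
    exact ENNReal.ofReal_ne_top
  · have key : ∀ u, 0 < u → u ≤ A c ω → ∀ x : ℝ,
        (tauInv A K u ω ≤ x ↔ u ≤ A (max 0 (min x c)) ω) := by
      intro u hu huc x
      have hτc : tauInv A K u ω ≤ c := (tau_le_iff hm hc hK0 hc0 hcK).mpr huc
      rcases le_total c x with hxc | hxc
      · rw [min_eq_right hxc, max_eq_right hc0]
        exact ⟨fun _ => huc, fun _ => hτc.trans hxc⟩
      · rcases le_total 0 x with hx0 | hx0
        · rw [min_eq_left hxc, max_eq_right hx0]
          exact tau_le_iff hm hc hK0 hx0 (lt_of_le_of_lt hxc hcK)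
        · rw [min_eq_left hxc, max_eq_left hx0, h0]
          constructor
          · intro hτx
            exact ((tau_le_iff hm hc hK0 le_rfl (hc0.trans_lt hcK)).mp
              (hτx.trans hx0)).trans_eq h0
          · intro h'
            exact (hu.not_ge h').elim
    rw [Measure.restrict_apply measurableSet_Ioc, Ioc_inter_Ioc,
      Measure.map_apply hτm measurableSet_Ioc,
      Measure.restrict_apply (hτm measurableSet_Ioc)]
    have hset : (fun u => tauInv A K u ω) ⁻¹' Ioc a b ∩ Ioc 0 (A c ω) =
        Ioc (A (max 0 (min a c)) ω) (A (max 0 (min b c)) ω) := by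
      ext u
      simp only [mem_inter_iff, mem_preimage, mem_Ioc]
      constructor
      · rintro ⟨⟨hτa, hτb⟩, hu0, huc⟩
        refine ⟨?_, (key u hu0 huc b).mp hτb⟩
        by_contra hle
        push_neg at hle
        exact absurd ((key u hu0 huc a).mpr hle) (not_le.mpr hτa)
      · rintro ⟨hBa, hBb⟩
        have hBa0 : 0 ≤ A (max 0 (min a c)) ω := by
          simpa [h0] using hm (le_max_left 0 (min a c))
        have hu0 : 0 < u := lt_of_le_of_lt hBa0 hBa
        have huc : u ≤ A c ω := hBb.trans (hm (max_le hc0 (min_le_right b c)))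
        refine ⟨⟨?_, (key u hu0 huc b).mpr hBb⟩, hu0, huc⟩
        by_contra hτa
        push_neg at hτa
        exact absurd ((key u hu0 huc a).mp hτa) (not_le.mpr hBa)
    rw [hset, Real.volume_Ioc, St.measure_Ioc, hSt, hSt]
    simpa using ofReal_clamp (fun x => A x ω) hm h0 hc0 hab.le


lemma measurable_tauInv [MeasurableSpace Ω]
    (hA : ∀ c : ℝ, Measurable fun ω => A c ω)
    (hm : ∀ ω, Monotone fun s => A s ω) (hc : ∀ ω, Continuous fun s => A s ω)
    (hK : 0 < K) : Measurable fun p : ℝ × Ω => tauInv A K p.1 p.2 := by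
  apply measurable_of_Iic
  intro x
  rcases lt_or_ge x 0 with hx | hx
  · have : (fun p : ℝ × Ω => tauInv A K p.1 p.2) ⁻¹' Iic x = ∅ := by
      ext p
      simp only [mem_preimage, mem_Iic, mem_empty_iff_false, iff_false, not_le]
      exact lt_of_lt_of_le hx (tau_nonneg hK.le)
    rw [this]; exact MeasurableSet.empty
  · rcases lt_or_ge x K with hxK | hxK
    · have : (fun p : ℝ × Ω => tauInv A K p.1 p.2) ⁻¹' Iic x
          = {p : ℝ × Ω | p.1 ≤ A x p.2} := by
        ext p
        simp only [mem_preimage, mem_Iic, mem_setOf_eq]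
        exact tau_le_iff (hm p.2) (hc p.2) hK.le hx hxK
      rw [this]
      exact measurableSet_le measurable_fst ((hA x).comp measurable_snd)
    · have : (fun p : ℝ × Ω => tauInv A K p.1 p.2) ⁻¹' Iic x = univ := by
        ext p
        simp only [mem_preimage, mem_Iic, mem_univ, iff_true]
        exact (tau_le_K hK.le).trans hxK
      rw [this]; exact MeasurableSet.univ

end St6Aux

set_option maxHeartbeats 1000000 in
open St6Aux in
/-- if `E|Z_{t∧η}| ≤ E ∫_0^{t∧η} |Z_s| dA_s` for all bounded stopping
configurations, then `Z_t = 0` a.s. for every `t ≥ 0`. -/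
theorem statement6 {Ω : Type*} [mΩ : MeasurableSpace Ω] (P : Measure Ω)
    [IsProbabilityMeasure P] (F : Filtration ℝ mΩ)
    (Z : ℝ → Ω → ℝ) (A : ℝ → Ω → ℝ)
    (hZmeas : Measurable (Function.uncurry Z))
    (hZadapted : Adapted F Z)
    (hZloc : ∀ T : ℝ, 0 < T → ∃ M : ℝ, ∀ t ∈ Icc (0:ℝ) T, ∀ ω, |Z t ω| ≤ M)
    (hAmono : ∀ ω, Monotone fun s => A s ω)
    (hAcont : ∀ ω, Continuous fun s => A s ω)
    (hA0 : ∀ ω, A 0 ω = 0)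
    (hAadapted : Adapted F A)
    (hyp : ∀ η : Ω → ℝ, IsStoppingTime F (fun ω => (η ω : WithTop ℝ)) → (∀ ω, 0 ≤ η ω) → ∀ t : ℝ, 0 ≤ t →
      ∫ ω, |Z (min t (η ω)) ω| ∂P ≤
        ∫ ω, (∫ s in Ioc (0:ℝ) (min t (η ω)), |Z s ω|
          ∂((⟨fun s => A s ω, hAmono ω,
              fun _ => (hAcont ω).continuousWithinAt⟩ : StieltjesFunction ℝ).measure)) ∂P) :
    ∀ t : ℝ, 0 ≤ t → ∀ᵐ ω ∂P, Z t ω = 0 := by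
  intro t₀ ht₀
  set T : ℝ := t₀ + 1 with hTdef
  obtain ⟨M₀, hM₀⟩ := hZloc T (by positivity)
  set M : ℝ := max M₀ 0 with hMdef
  have hM0 : 0 ≤ M := le_max_right _ _
  have hMb : ∀ t ∈ Icc (0:ℝ) T, ∀ ω, |Z t ω| ≤ M := fun t ht ω =>
    (hM₀ t ht ω).trans (le_max_left _ _)
  set K : ℝ := T + 1 with hKdef
  have hK0 : (0:ℝ) < K := by simp only [hKdef, hTdef]; linarith
  have htT : t₀ ≤ T := by simp only [hTdef]; linarith
  have hTK : T < K := by simp only [hKdef]; linarith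
  -- measurability preliminaries
  have mA : ∀ c : ℝ, Measurable fun ω => A c ω := fun c =>
    (hAadapted c).mono (F.le c) le_rfl
  have mτ : Measurable fun p : ℝ × Ω => tauInv A K p.1 p.2 :=
    measurable_tauInv mA hAmono hAcont hK0
  have mτu : ∀ u : ℝ, Measurable fun ω => tauInv A K u ω := fun u =>
    mτ.comp (measurable_const.prodMk measurable_id)
  have hτst : ∀ u : ℝ, IsStoppingTime F (fun ω => tauInv A K u ω) := by
    intro u c
    simp only [WithTop.coe_le_coe]
    rcases lt_or_ge c 0 with hc | hc
    · have : {ω | tauInv A K u ω ≤ c} = ∅ := by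
        ext ω
        simp only [mem_setOf_eq, mem_empty_iff_false, iff_false, not_le]
        exact lt_of_lt_of_le hc (tau_nonneg hK0.le)
      rw [this]; exact @MeasurableSet.empty _ (F.seq c)
    · rcases lt_or_ge c K with hcK | hcK
      · have : {ω | tauInv A K u ω ≤ c} = (fun ω => A c ω) ⁻¹' Ici u := by
          ext ω
          simp only [mem_setOf_eq, mem_preimage, mem_Ici]
          exact tau_le_iff (hAmono ω) (hAcont ω) hK0.le hc hcK
        rw [this]
        exact (hAadapted c) measurableSet_Ici
      · have : {ω | tauInv A K u ω ≤ c} = univ := by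
          ext ω
          simp only [mem_setOf_eq, mem_univ, iff_true]
          exact (tau_le_K hK0.le).trans hcK
        rw [this]; exact @MeasurableSet.univ _ (F.seq c)
  have mst : ∀ (η : Ω → ℝ), IsStoppingTime F (fun ω => (η ω : WithTop ℝ)) → Measurable η := by
    intro η hη
    apply measurable_of_Iic
    intro x
    exact (by simpa only [WithTop.coe_le_coe] using F.le x _ (hη x) : MeasurableSet {ω | η ω ≤ x})
  -- the key Gronwall-type estimate
  have key : ∀ n : ℕ, ∀ η : Ω → ℝ, IsStoppingTime F (fun ω => (η ω : WithTop ℝ)) → (∀ ω, 0 ≤ η ω) →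
      ∀ t : ℝ, 0 ≤ t → t ≤ T → ∀ r : ℝ, 0 < r → (∀ ω, A (min t (η ω)) ω ≤ r) →
      ∫ ω, |Z (min t (η ω)) ω| ∂P ≤ M * r ^ n / n.factorial := by
    intro n
    induction n with
    | zero =>
      intro η hη hη0 t ht htT' r hr hrA
      have hb : ∀ ω, |Z (min t (η ω)) ω| ≤ M := fun ω =>
        hMb _ ⟨le_min ht (hη0 ω), (min_le_left _ _).trans htT'⟩ ω
      calc ∫ ω, |Z (min t (η ω)) ω| ∂P ≤ ∫ _ω, M ∂P :=
            integral_mono_of_nonneg (ae_of_all _ fun ω => abs_nonneg _)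
              (integrable_const M) (ae_of_all _ hb)
        _ = M := by simp
        _ = M * r ^ 0 / (Nat.factorial 0 : ℝ) := by simp
    | succ n IH =>
      intro η hη hη0 t ht htT' r hr hrA
      have mη : Measurable η := mst η hη
      refine (hyp η hη hη0 t ht).trans ?_
      set σ : ℝ → Ω → ℝ := fun u ω => min (tauInv A K u ω) (η ω) with hσdef
      set g : ℝ → Ω → ℝ≥0∞ := fun u ω => ENNReal.ofReal |Z (min t (σ u ω)) ω| with hgdef
      have mg : Measurable fun p : ℝ × Ω => g p.1 p.2 := by
        have m1 : Measurable fun p : ℝ × Ω => min t (σ p.1 p.2) :=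
          measurable_const.min (mτ.min (mη.comp measurable_snd))
        exact ((hZmeas.comp (m1.prodMk measurable_snd)).abs).ennreal_ofReal
      have hσ0 : ∀ u ω, 0 ≤ σ u ω := fun u ω => le_min (tau_nonneg hK0.le) (hη0 ω)
      have htmem : ∀ u ω, min t (σ u ω) ∈ Icc (0:ℝ) T := fun u ω =>
        ⟨le_min ht (hσ0 u ω), (min_le_left _ _).trans htT'⟩
      have hgle : ∀ u ω, g u ω ≤ ENNReal.ofReal M := fun u ω =>
        ENNReal.ofReal_le_ofReal (hMb _ (htmem u ω) ω)
      have hlt : ∀ ω, (∫⁻ u in Ioc 0 r, g u ω) ≤ ENNReal.ofReal M * ENNReal.ofReal r := by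
        intro ω
        calc (∫⁻ u in Ioc 0 r, g u ω) ≤ ∫⁻ _u in Ioc 0 r, ENNReal.ofReal M :=
              lintegral_mono fun u => hgle u ω
          _ = ENNReal.ofReal M * ENNReal.ofReal r := by
              simp [Real.volume_Ioc, hr.le]
      have hne : ∀ ω, (∫⁻ u in Ioc 0 r, g u ω) ≠ ∞ := fun ω =>
        ((hlt ω).trans_lt (ENNReal.mul_lt_top ENNReal.ofReal_lt_top ENNReal.ofReal_lt_top)).ne
      set R : Ω → ℝ := fun ω => (∫⁻ u in Ioc 0 r, g u ω).toReal with hRdef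
      -- Step 1 : pathwise comparison
      have step1 : ∀ ω, (∫ s in Ioc (0:ℝ) (min t (η ω)), |Z s ω|
          ∂((⟨fun s => A s ω, hAmono ω,
              fun _ => (hAcont ω).continuousWithinAt⟩ : StieltjesFunction ℝ).measure)) ≤ R ω := by
        intro ω
        set c : ℝ := min t (η ω) with hcdef
        have hc0 : 0 ≤ c := le_min ht (hη0 ω)
        have hcK : c < K := lt_of_le_of_lt ((min_le_left _ _).trans htT') hTK
        have hmeq := map_volume_tauInv (A := A) (K := K) (ω := ω) (hAmono ω) (hAcont ω) (hA0 ω)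
          (⟨fun s => A s ω, hAmono ω, fun _ => (hAcont ω).continuousWithinAt⟩ : StieltjesFunction ℝ)
          (fun _ => rfl) hc0 hcK
        have hτmono : Monotone fun u : ℝ => tauInv A K u ω := fun _ _ h => tau_mono hK0.le h
        have mτω : Measurable fun u : ℝ => tauInv A K u ω := hτmono.measurable
        have mZs : Measurable fun s => Z s ω :=
          hZmeas.comp (measurable_id.prodMk measurable_const)
        rw [integral_eq_lintegral_of_nonneg_ae (ae_of_all _ fun s => abs_nonneg _)
          ((mZs.abs).aestronglyMeasurable)]
        refine ENNReal.toReal_mono (hne ω) ?_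
        have heq1 : (∫⁻ s in Ioc (0:ℝ) c, ENNReal.ofReal |Z s ω|
            ∂((⟨fun s => A s ω, hAmono ω,
                fun _ => (hAcont ω).continuousWithinAt⟩ : StieltjesFunction ℝ).measure))
            = ∫⁻ u in Ioc (0:ℝ) (A c ω), ENNReal.ofReal |Z (tauInv A K u ω) ω| := by
          rw [hmeq]
          exact lintegral_map ((mZs.abs).ennreal_ofReal) mτω
        rw [heq1]
        have heq2 : (∫⁻ u in Ioc (0:ℝ) (A c ω), ENNReal.ofReal |Z (tauInv A K u ω) ω|)
            = ∫⁻ u in Ioc (0:ℝ) (A c ω), g u ω := by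
          refine setLIntegral_congr_fun measurableSet_Ioc (fun u hu => ?_)
          have hτc : tauInv A K u ω ≤ c :=
            (tau_le_iff (hAmono ω) (hAcont ω) hK0.le hc0 hcK).mpr hu.2
          have hmin : min t (σ u ω) = tauInv A K u ω := by
            have h1 : σ u ω = tauInv A K u ω :=
              min_eq_left (hτc.trans (min_le_right _ _))
            rw [h1]
            exact min_eq_right (hτc.trans (min_le_left _ _))
          simp only [hgdef, hmin]
        rw [heq2]
        exact lintegral_mono_set (Ioc_subset_Ioc_right (hrA ω))
      -- Step 2 : compare integrals
      have mR' : Measurable fun ω => ∫⁻ u in Ioc 0 r, g u ω := by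
        exact Measurable.lintegral_prod_left' (f := fun p : ℝ × Ω => g p.1 p.2) mg
      have mR : Measurable R := mR'.ennreal_toReal
      have hR0 : ∀ ω, 0 ≤ R ω := fun ω => ENNReal.toReal_nonneg
      have hRb : ∀ ω, R ω ≤ M * r := by
        intro ω
        have := ENNReal.toReal_mono
          (ENNReal.mul_lt_top ENNReal.ofReal_lt_top ENNReal.ofReal_lt_top).ne (hlt ω)
        rwa [← ENNReal.ofReal_mul hM0, ENNReal.toReal_ofReal (by positivity)] at this
      have hRint : Integrable R P := by
        refine Integrable.mono' (integrable_const (M * r)) mR.aestronglyMeasurable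
          (ae_of_all _ fun ω => ?_)
        rw [Real.norm_eq_abs, abs_of_nonneg (hR0 ω)]
        exact hRb ω
      have step2 : (∫ ω, (∫ s in Ioc (0:ℝ) (min t (η ω)), |Z s ω|
          ∂((⟨fun s => A s ω, hAmono ω,
              fun _ => (hAcont ω).continuousWithinAt⟩ : StieltjesFunction ℝ).measure)) ∂P)
          ≤ ∫ ω, R ω ∂P :=
        integral_mono_of_nonneg
          (ae_of_all _ fun ω => integral_nonneg fun s => abs_nonneg _)
          hRint (ae_of_all _ step1)
      refine step2.trans ?_
      -- Step 3 : to lintegral and swap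
      have step3 : ∫ ω, R ω ∂P = (∫⁻ ω, (∫⁻ u in Ioc 0 r, g u ω) ∂P).toReal := by
        rw [integral_eq_lintegral_of_nonneg_ae (ae_of_all _ hR0) mR.aestronglyMeasurable]
        congr 1
        exact lintegral_congr fun ω => ENNReal.ofReal_toReal (hne ω)
      have step4 : (∫⁻ ω, (∫⁻ u in Ioc 0 r, g u ω) ∂P)
          = ∫⁻ u in Ioc 0 r, ∫⁻ ω, g u ω ∂P :=
        lintegral_lintegral_swap (f := fun ω u => g u ω)
          ((mg.comp measurable_swap).aemeasurable)
      -- Step 5 : inner bound via induction hypothesis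
      have hIH : ∀ u : ℝ, u ∈ Ioc (0:ℝ) r →
          (∫⁻ ω, g u ω ∂P) ≤ ENNReal.ofReal (M * u ^ n / n.factorial) := by
        rintro u ⟨hu, hur⟩
        have hσst : IsStoppingTime F (fun ω => (σ u ω : WithTop ℝ)) := fun i => by
            have := (hτst u).min hη i
            simp only [← WithTop.coe_min] at this
            exact this
        have hbound : ∀ ω, A (min t (σ u ω)) ω ≤ u := fun ω =>
          A_le_of_le_tau (hAmono ω) (hAcont ω) (hA0 ω) hK0.le hu
            ((min_le_right t _).trans (min_le_left _ _))
        have hIHu := IH (σ u) hσst (hσ0 u) t ht htT' u hu hbound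
        have mZu : Measurable fun ω => |Z (min t (σ u ω)) ω| :=
          (hZmeas.comp ((measurable_const.min ((mτu u).min mη)).prodMk measurable_id)).abs
        have hint : Integrable (fun ω => |Z (min t (σ u ω)) ω|) P := by
          refine Integrable.mono' (integrable_const M) mZu.aestronglyMeasurable
            (ae_of_all _ fun ω => ?_)
          rw [Real.norm_eq_abs, abs_abs]
          exact hMb _ (htmem u ω) ω
        calc (∫⁻ ω, g u ω ∂P)
            = ENNReal.ofReal (∫ ω, |Z (min t (σ u ω)) ω| ∂P) :=
              (ofReal_integral_eq_lintegral_ofReal hint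
                (ae_of_all _ fun ω => abs_nonneg _)).symm
          _ ≤ ENNReal.ofReal (M * u ^ n / n.factorial) := ENNReal.ofReal_le_ofReal hIHu
      have step5 : (∫⁻ u in Ioc 0 r, ∫⁻ ω, g u ω ∂P)
          ≤ ∫⁻ u in Ioc 0 r, ENNReal.ofReal (M * u ^ n / n.factorial) := by
        refine setLIntegral_mono (by fun_prop) hIH
      -- Step 6 : compute the resulting integral
      have step6 : (∫⁻ u in Ioc 0 r, ENNReal.ofReal (M * u ^ n / n.factorial))
          = ENNReal.ofReal (M * r ^ (n + 1) / (n + 1).factorial) := by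
        have hcont : Continuous fun u : ℝ => M * u ^ n / (n.factorial : ℝ) := by fun_prop
        have hintu : IntegrableOn (fun u : ℝ => M * u ^ n / (n.factorial : ℝ))
            (Ioc 0 r) volume := hcont.integrableOn_Ioc
        rw [← ofReal_integral_eq_lintegral_ofReal hintu
          ((ae_restrict_iff' measurableSet_Ioc).mpr (ae_of_all _ fun u hu =>
            div_nonneg (mul_nonneg hM0 (pow_nonneg hu.1.le n)) (Nat.cast_nonneg _)))]
        congr 1
        rw [← intervalIntegral.integral_of_le hr.le]
        have hrw : ∀ u : ℝ, M * u ^ n / (n.factorial : ℝ)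
            = (M / (n.factorial : ℝ)) * u ^ n := fun u => by ring
        simp_rw [hrw]
        rw [intervalIntegral.integral_const_mul, integral_pow]
        have hfac : ((n + 1).factorial : ℝ) = (n + 1) * (n.factorial : ℝ) := by
          rw [Nat.factorial_succ]; push_cast; ring
        have hnfac : (n.factorial : ℝ) ≠ 0 := by positivity
        rw [hfac, zero_pow n.succ_ne_zero, sub_zero, div_mul_div_comm,
          mul_comm ((n.factorial : ℝ)) (((n : ℝ) + 1))]
      -- assemble
      rw [step3, step4]
      refine (ENNReal.toReal_mono ENNReal.ofReal_ne_top
        (step5.trans (le_of_eq step6))).trans ?_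
      rw [ENNReal.toReal_ofReal
        (div_nonneg (mul_nonneg hM0 (pow_nonneg hr.le _)) (Nat.cast_nonneg _))]
  -- conclusion
  have hEk : ∀ k : ℕ, ∀ᵐ ω ∂P, Z (min t₀ (tauInv A K ((k : ℝ) + 1) ω)) ω = 0 := by
    intro k
    set η : Ω → ℝ := fun ω => tauInv A K ((k : ℝ) + 1) ω with hηdef
    have hbnd : ∀ n : ℕ, ∫ ω, |Z (min t₀ (η ω)) ω| ∂P
        ≤ M * ((k : ℝ) + 1) ^ n / n.factorial := fun n =>
      key n η (hτst _) (fun ω => tau_nonneg hK0.le) t₀ ht₀ htT ((k : ℝ) + 1)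
        (by positivity)
        (fun ω => A_le_of_le_tau (hAmono ω) (hAcont ω) (hA0 ω) hK0.le (by positivity)
          (min_le_right _ _))
    have hlim : Tendsto (fun n : ℕ => M * ((k : ℝ) + 1) ^ n / n.factorial) atTop (𝓝 0) := by
      have h1 := FloorSemiring.tendsto_pow_div_factorial_atTop (K := ℝ) ((k : ℝ) + 1)
      have h2 := h1.const_mul M
      simpa [mul_div_assoc, mul_zero] using h2
    have hle : ∫ ω, |Z (min t₀ (η ω)) ω| ∂P ≤ 0 :=
      ge_of_tendsto hlim (Eventually.of_forall hbnd)
    have hzero : ∫ ω, |Z (min t₀ (η ω)) ω| ∂P = 0 :=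
      le_antisymm hle (integral_nonneg fun ω => abs_nonneg _)
    have mZu : Measurable fun ω => |Z (min t₀ (η ω)) ω| :=
      (hZmeas.comp ((measurable_const.min (mτu _)).prodMk measurable_id)).abs
    have hint : Integrable (fun ω => |Z (min t₀ (η ω)) ω|) P := by
      refine Integrable.mono' (integrable_const M) mZu.aestronglyMeasurable
        (ae_of_all _ fun ω => ?_)
      rw [Real.norm_eq_abs, abs_abs]
      exact hMb _ ⟨le_min ht₀ (tau_nonneg hK0.le), (min_le_left _ _).trans htT⟩ ω
    have := (integral_eq_zero_iff_of_nonneg_ae (ae_of_all _ fun ω => abs_nonneg _) hint).mp hzero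
    filter_upwards [this] with ω hω
    simpa [abs_eq_zero] using hω
  have hall : ∀ᵐ ω ∂P, ∀ k : ℕ, Z (min t₀ (tauInv A K ((k : ℝ) + 1) ω)) ω = 0 :=
    ae_all_iff.mpr hEk
  filter_upwards [hall] with ω hω
  set k : ℕ := ⌈A K ω⌉₊ with hkdef
  have hAK : A K ω < (k : ℝ) + 1 := (Nat.le_ceil _).trans_lt (lt_add_one _)
  have hτK : tauInv A K ((k : ℝ) + 1) ω = K := tau_eq_K (hAmono ω) hK0.le hAK
  have hmin : min t₀ (tauInv A K ((k : ℝ) + 1) ω) = t₀ := by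
    rw [hτK]
    exact min_eq_left (by simp only [hKdef, hTdef]; linarith)
  have := hω k
  rwa [hmin] at this


end
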